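/- arXiv:1404.0050 — 3 statements merged into one kernel-verified Lean document; each statement's English description precedes it below -/
import Mathlib

section
/- Over the standard simplex Σ_m = {x ∈ ℝ_{≥0}^m : x_1 + … + x_m ≤ 1}, one has (m+1)·∫_{Σ_m} x_1 log x_1 dx = −(1/m!)·∑_{k=2}^{m+1} 1/k. -/
open MeasureTheory Finset

def Sx (n : ℕ) (c : ℝ) : Set (Fin n → ℝ) := {x | (∀ i, 0 ≤ x i) ∧ ∑ i, x i ≤ c}

lemma measurableSet_Sx (n : ℕ) (c : ℝ) : MeasurableSet (Sx n c) := by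
  have h1 : MeasurableSet {x : Fin n → ℝ | ∀ i, 0 ≤ x i} := by
    have : {x : Fin n → ℝ | ∀ i, 0 ≤ x i} = ⋂ i, {x : Fin n → ℝ | 0 ≤ x i} := by
      ext x; simp
    rw [this]
    exact MeasurableSet.iInter fun i => measurableSet_le measurable_const (measurable_pi_apply i)
  have h2 : MeasurableSet {x : Fin n → ℝ | ∑ i, x i ≤ c} :=
    measurableSet_le (Finset.measurable_sum _ fun i _ => measurable_pi_apply i) measurable_const
  exact h1.inter h2

lemma Sx_empty {n : ℕ} {c : ℝ} (hc : c < 0) : Sx n c = ∅ := by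
  ext x
  simp only [Sx, Set.mem_setOf_eq, Set.mem_empty_iff_false, iff_false, not_and]
  intro hx hs
  exact absurd hs (not_le.2 (lt_of_lt_of_le hc (Finset.sum_nonneg fun i _ => hx i))).elim

example (n : ℕ) (i : Fin (n+1)) (x : Fin (n+1) → ℝ) :
    (MeasurableEquiv.piFinSuccAbove (fun _ : Fin (n+1) => ℝ) i) x
      = (x i, fun j => x (i.succAbove j)) := rfl

def Tx (n : ℕ) (c : ℝ) : Set (ℝ × (Fin n → ℝ)) :=
  {p | 0 ≤ p.1 ∧ (∀ j, 0 ≤ p.2 j) ∧ p.1 + ∑ j, p.2 j ≤ c}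

lemma Sx_preimage (n : ℕ) (c : ℝ) (i : Fin (n+1)) :
    Sx (n+1) c = (MeasurableEquiv.piFinSuccAbove (fun _ : Fin (n+1) => ℝ) i) ⁻¹' (Tx n c) := by
  ext x
  have he : (MeasurableEquiv.piFinSuccAbove (fun _ : Fin (n+1) => ℝ) i) x
      = (x i, fun j => x (i.succAbove j)) := rfl
  simp only [Sx, Tx, Set.mem_preimage, Set.mem_setOf_eq, he]
  constructor
  · rintro ⟨h1, h2⟩
    exact ⟨h1 i, fun j => h1 _, by rwa [← Fin.sum_univ_succAbove x i]⟩
  · rintro ⟨h1, h2, h3⟩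
    refine ⟨fun j => ?_, by rwa [Fin.sum_univ_succAbove x i]⟩
    rcases eq_or_ne j i with rfl | hj
    · exact h1
    · obtain ⟨k, rfl⟩ := Fin.exists_succAbove_eq hj
      exact h2 k

lemma measurableSet_Tx (n : ℕ) (c : ℝ) : MeasurableSet (Tx n c) := by
  have h1 : MeasurableSet {p : ℝ × (Fin n → ℝ) | 0 ≤ p.1} :=
    measurableSet_le measurable_const measurable_fst
  have h2 : MeasurableSet {p : ℝ × (Fin n → ℝ) | ∀ j, 0 ≤ p.2 j} := by
    have : {p : ℝ × (Fin n → ℝ) | ∀ j, 0 ≤ p.2 j} = ⋂ j, {p : ℝ × (Fin n → ℝ) | 0 ≤ p.2 j} := by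
      ext p; simp
    rw [this]
    exact MeasurableSet.iInter fun j =>
      measurableSet_le measurable_const (measurable_snd.eval)
  have h3 : MeasurableSet {p : ℝ × (Fin n → ℝ) | p.1 + ∑ j, p.2 j ≤ c} :=
    measurableSet_le (measurable_fst.add
      (Finset.measurable_sum _ fun j _ => (measurable_pi_apply j).comp measurable_snd))
      measurable_const
  exact h1.inter (h2.inter h3)

lemma Tx_slice (n : ℕ) (c t : ℝ) :
    Prod.mk t ⁻¹' (Tx n c) = if 0 ≤ t then Sx n (c - t) else ∅ := by
  split_ifs with ht
  · ext y
    simp only [Tx, Sx, Set.mem_preimage, Set.mem_setOf_eq]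
    constructor
    · rintro ⟨-, h2, h3⟩; exact ⟨h2, by linarith⟩
    · rintro ⟨h2, h3⟩; exact ⟨ht, h2, by linarith⟩
  · ext y
    simp only [Tx, Set.mem_preimage, Set.mem_setOf_eq, Set.mem_empty_iff_false, iff_false, not_and]
    intro h; exact absurd h ht

lemma volume_Sx : ∀ (n : ℕ) (c : ℝ), 0 ≤ c →
    volume (Sx n c) = ENNReal.ofReal (c^n / n.factorial) := by
  intro n
  induction n with
  | zero =>
    intro c hc
    have : Sx 0 c = Set.univ := by
      ext x; simp [Sx, hc]
    rw [this, volume_pi, Measure.pi_univ]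
    simp
  | succ n ih =>
    intro c hc
    have hmp := volume_preserving_piFinSuccAbove (fun _ : Fin (n+1) => ℝ) 0
    rw [Sx_preimage n c 0, hmp.measure_preimage (measurableSet_Tx n c).nullMeasurableSet,
      Measure.volume_eq_prod, Measure.prod_apply (measurableSet_Tx n c)]
    have hslice : ∀ t : ℝ, volume (Prod.mk t ⁻¹' Tx n c)
        = ENNReal.ofReal (Set.indicator (Set.Icc 0 c) (fun t => (c-t)^n / n.factorial) t) := by
      intro t
      rw [Tx_slice]
      split_ifs with ht
      · by_cases htc : t ≤ c
        · rw [ih (c - t) (by linarith), Set.indicator_of_mem (Set.mem_Icc.2 ⟨ht, htc⟩)]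
        · rw [Sx_empty (by linarith), Set.indicator_of_notMem (by simp [Set.mem_Icc]; intro; linarith)]
          simp
      · rw [Set.indicator_of_notMem (by simp [Set.mem_Icc]; intro; linarith)]
        simp
    simp_rw [hslice]
    have hcont : Continuous (fun t : ℝ => (c-t)^n / n.factorial) :=
      ((continuous_const.sub continuous_id).pow n).div_const _
    have hint : Integrable (Set.indicator (Set.Icc 0 c) (fun t => (c-t)^n / n.factorial)) :=
      (hcont.integrableOn_Icc).integrable_indicator measurableSet_Icc
    rw [← ofReal_integral_eq_lintegral_ofReal hint (Filter.Eventually.of_forall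
      (Set.indicator_nonneg (fun t ht => div_nonneg (pow_nonneg (by linarith [(Set.mem_Icc.1 ht).2]) _) (by positivity))))]
    congr 1
    rw [integral_indicator measurableSet_Icc, MeasureTheory.integral_Icc_eq_integral_Ioc,
      ← intervalIntegral.integral_of_le hc]
    rw [intervalIntegral.integral_comp_sub_left (fun s : ℝ => s^n / n.factorial) c]
    simp only [sub_zero, sub_self]
    rw [intervalIntegral.integral_div, integral_pow]
    rw [Nat.factorial_succ]
    push_cast
    field_simp
    try ring

lemma marginal (n : ℕ) (i : Fin (n+1)) :
    ∫ x in Sx (n+1) 1, (x i) * Real.log (x i)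
      = ∫ t in (0:ℝ)..1, (t * Real.log t) * ((1-t)^n / n.factorial) := by
  set e := MeasurableEquiv.piFinSuccAbove (fun _ : Fin (n+1) => ℝ) i with he
  have hmp := volume_preserving_piFinSuccAbove (fun _ : Fin (n+1) => ℝ) i
  have hS := Sx_preimage n 1 i
  set gp : ℝ × (Fin n → ℝ) → ℝ := fun p => p.1 * Real.log p.1 with hgp
  have hTvol : volume (Tx n 1) = ENNReal.ofReal ((1:ℝ)^(n+1)/(n+1).factorial) := by
    rw [← hmp.measure_preimage (measurableSet_Tx n 1).nullMeasurableSet, ← hS,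
      volume_Sx (n+1) 1 zero_le_one]
  have hTint : IntegrableOn gp (Tx n 1) volume := by
    apply Measure.integrableOn_of_bounded (M := 1)
    · rw [hTvol]; exact ENNReal.ofReal_ne_top
    · exact (Real.continuous_mul_log.comp continuous_fst).aestronglyMeasurable
    · apply ae_restrict_of_forall_mem (measurableSet_Tx n 1)
      rintro ⟨t, y⟩ ⟨h1, h2, h3⟩
      have hsum : 0 ≤ ∑ j, y j := Finset.sum_nonneg fun j _ => h2 j
      have ht1 : t ≤ 1 := by dsimp at h3 ⊢; linarith
      rcases eq_or_lt_of_le h1 with rfl | hpos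
      · simp [hgp]
      · have := Real.abs_log_mul_self_lt t hpos ht1
        rw [hgp]; simp only [Real.norm_eq_abs]
        calc |t * Real.log t| = |Real.log t * t| := by rw [mul_comm]
        _ ≤ 1 := this.le
  have stepA : ∫ x in Sx (n+1) 1, (x i) * Real.log (x i)
      = ∫ p in Tx n 1, gp p := by
    rw [← integral_indicator (measurableSet_Sx _ _), ← integral_indicator (measurableSet_Tx n 1)]
    rw [← hmp.integral_comp e.measurableEmbedding (Set.indicator (Tx n 1) gp)]
    congr 1
    funext x
    rw [hS]
    rcases Classical.em ((MeasurableEquiv.piFinSuccAbove (fun _ : Fin (n+1) => ℝ) i) x ∈ Tx n 1) with hx | hx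
    · rw [Set.indicator_of_mem hx, Set.indicator_of_mem (Set.mem_preimage.2 hx)]
      rfl
    · rw [Set.indicator_of_notMem hx,
        Set.indicator_of_notMem (fun h => hx (Set.mem_preimage.1 h))]
  rw [stepA, ← integral_indicator (measurableSet_Tx n 1), Measure.volume_eq_prod,
    MeasureTheory.integral_prod _
      ((Measure.volume_eq_prod ℝ (Fin n → ℝ)) ▸ hTint.integrable_indicator (measurableSet_Tx n 1))]
  have hinner : ∀ t : ℝ, (∫ y : Fin n → ℝ, Set.indicator (Tx n 1) gp (t, y))
      = Set.indicator (Set.Icc 0 1) (fun t => (t * Real.log t) * ((1-t)^n / n.factorial)) t := by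
    intro t
    have h2 : ∀ y, Set.indicator (Tx n 1) gp (t, y)
        = Set.indicator (Prod.mk t ⁻¹' Tx n 1) (fun _ => t * Real.log t) y := fun y => rfl
    simp_rw [h2, Tx_slice]
    split_ifs with ht
    · by_cases h1t : t ≤ 1
      · have h1mt : (0:ℝ) ≤ 1 - t := by linarith
        rw [integral_indicator_const _ (measurableSet_Sx _ _), measureReal_def,
          volume_Sx n (1-t) (by linarith),
          Set.indicator_of_mem (Set.mem_Icc.2 ⟨ht, h1t⟩),
          ENNReal.toReal_ofReal (div_nonneg (pow_nonneg h1mt n) (Nat.cast_nonneg _))]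
        rw [smul_eq_mul]; ring
      · rw [Sx_empty (by linarith), Set.indicator_of_notMem
          (by simp only [Set.mem_Icc, not_and, not_le]; intro; linarith)]
        simp
    · rw [Set.indicator_of_notMem
          (by simp only [Set.mem_Icc, not_and, not_le]; intro h; exact absurd h ht)]
      simp
  simp_rw [hinner]
  rw [integral_indicator measurableSet_Icc, MeasureTheory.integral_Icc_eq_integral_Ioc,
    ← intervalIntegral.integral_of_le zero_le_one]

noncomputable def Wd (n : ℕ) (t : ℝ) : ℝ :=
  (∑ j ∈ range (n+1), (1-t)^j)/(n+1) - (∑ j ∈ range (n+2), (1-t)^j)/(n+2)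

noncomputable def Wf (n : ℕ) (t : ℝ) : ℝ :=
  (∑ j ∈ range (n+1), (1-(1-t)^(j+1))/(j+1))/(n+1)
  - (∑ j ∈ range (n+2), (1-(1-t)^(j+1))/(j+1))/(n+2)

noncomputable def vf (n : ℕ) (t : ℝ) : ℝ :=
  (1-(1-t)^(n+1))/(n+1) - (1-(1-t)^(n+2))/(n+2)

noncomputable def Ff (n : ℕ) (t : ℝ) : ℝ := Wd n t * (t * Real.log t) - Wf n t

lemma geom_aux (k : ℕ) (t : ℝ) : t * ∑ j ∈ range k, (1-t)^j = 1 - (1-t)^k := by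
  have := geom_sum_mul (1-t) k
  nlinarith [this]

lemma vf_eq (n : ℕ) (t : ℝ) : vf n t = t * Wd n t := by
  unfold vf Wd
  rw [mul_sub]
  rw [← mul_div_assoc, ← mul_div_assoc, geom_aux, geom_aux]

lemma Ff_eq (n : ℕ) : Ff n = fun t => vf n t * Real.log t - Wf n t := by
  funext t; rw [Ff, vf_eq]; ring

lemma hasDerivAt_w (k : ℕ) (t : ℝ) :
    HasDerivAt (fun t : ℝ => (1-(1-t)^(k+1))/(k+1)) ((1-t)^k) t := by
  have h1 : HasDerivAt (fun t : ℝ => 1 - t) (-1) t := (hasDerivAt_id t).const_sub 1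
  have h2 := (h1.pow (k+1)).const_sub 1
  have h3 := h2.div_const ((k:ℝ)+1)
  convert h3 using 1
  rotate_left 3
  have : (k:ℝ)+1 ≠ 0 := by positivity
  push_cast
  field_simp
  all_goals rfl

lemma hasDerivAt_Wf (n : ℕ) (t : ℝ) : HasDerivAt (Wf n) (Wd n t) t := by
  unfold Wf Wd
  exact ((HasDerivAt.fun_sum (fun j _ => hasDerivAt_w j t)).div_const _).sub
    ((HasDerivAt.fun_sum (fun j _ => hasDerivAt_w j t)).div_const _)

lemma hasDerivAt_vf (n : ℕ) (t : ℝ) : HasDerivAt (vf n) (t * (1-t)^n) t := by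
  have h := (hasDerivAt_w n t).sub (hasDerivAt_w (n+1) t)
  have he : vf n = fun s : ℝ => (1-(1-s)^(n+1))/(↑n+1) - (1-(1-s)^(n+1+1))/(↑(n+1)+1) := by
    funext s; unfold vf; push_cast; norm_num [show n+2 = n+1+1 from rfl]; ring
  rw [he]
  convert h using 1
  rotate_left 3
  rw [pow_succ]; ring
  all_goals rfl

lemma hasDerivAt_Ff (n : ℕ) {t : ℝ} (ht : t ≠ 0) :
    HasDerivAt (Ff n) (t * Real.log t * (1-t)^n) t := by
  rw [Ff_eq]
  have h := ((hasDerivAt_vf n t).mul (Real.hasDerivAt_log ht)).sub (hasDerivAt_Wf n t)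
  convert h using 1
  rotate_left 3
  rw [vf_eq]
  field_simp
  ring
  all_goals rfl

lemma continuous_Wd (n : ℕ) : Continuous (Wd n) := by
  unfold Wd
  exact ((continuous_finset_sum _ fun j _ => (continuous_const.sub continuous_id).pow j).div_const _).sub
    ((continuous_finset_sum _ fun j _ => (continuous_const.sub continuous_id).pow j).div_const _)

lemma continuous_Wf (n : ℕ) : Continuous (Wf n) := by
  unfold Wf
  exact ((continuous_finset_sum _ fun j _ =>
      ((continuous_const.sub ((continuous_const.sub continuous_id).pow _)).div_const _)).div_const _).sub
    ((continuous_finset_sum _ fun j _ =>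
      ((continuous_const.sub ((continuous_const.sub continuous_id).pow _)).div_const _)).div_const _)

lemma continuous_Ff (n : ℕ) : Continuous (Ff n) :=
  ((continuous_Wd n).mul Real.continuous_mul_log).sub (continuous_Wf n)

lemma oneDim (n : ℕ) :
    ∫ t in (0:ℝ)..1, t * Real.log t * (1-t)^n
      = (∑ j ∈ range (n+2), (1:ℝ)/(j+1))/(n+2) - (∑ j ∈ range (n+1), (1:ℝ)/(j+1))/(n+1) := by
  have key : ∫ t in (0:ℝ)..1, t * Real.log t * (1-t)^n = Ff n 1 - Ff n 0 := by
    apply intervalIntegral.integral_eq_sub_of_hasDerivAt_of_le zero_le_one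
      (continuous_Ff n).continuousOn
      (fun t ht => hasDerivAt_Ff n (ne_of_gt ht.1))
    exact ((Real.continuous_mul_log.mul ((continuous_const.sub continuous_id).pow n))).intervalIntegrable 0 1
  rw [key]
  have h0 : Ff n 0 = 0 := by
    simp [Ff, Wf, Real.log_zero]
  have h1 : Ff n 1 = -Wf n 1 := by
    simp [Ff, Real.log_one]
  rw [h0, h1, Wf]
  norm_num

theorem stmt_8 (m : ℕ) (hm : 0 < m) :
    ((m : ℝ) + 1) *
        ∫ x in {x : Fin m → ℝ | (∀ i, 0 ≤ x i) ∧ ∑ i, x i ≤ 1},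
          x ⟨0, hm⟩ * Real.log (x ⟨0, hm⟩) =
      -(1 / (Nat.factorial m : ℝ)) * ∑ k ∈ Finset.Icc 2 (m + 1), (1 : ℝ) / k := by
  obtain ⟨n, rfl⟩ : ∃ n, m = n + 1 := ⟨m - 1, (Nat.succ_pred_eq_of_pos hm).symm⟩
  have hmarg := marginal n ⟨0, hm⟩
  rw [show {x : Fin (n+1) → ℝ | (∀ i, 0 ≤ x i) ∧ ∑ i, x i ≤ 1} = Sx (n+1) 1 from rfl, hmarg]
  have hring : ∀ t : ℝ, (t * Real.log t) * ((1-t)^n / n.factorial)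
      = (t * Real.log t * (1-t)^n) / n.factorial := fun t => by ring
  simp_rw [hring]
  rw [intervalIntegral.integral_div, oneDim n]
  have hIcc : ∀ N : ℕ, ∑ k ∈ Finset.Icc 2 (N+2), (1:ℝ)/k
      = ∑ j ∈ range (N+2), (1:ℝ)/(j+1) - 1 := by
    intro N
    induction N with
    | zero => norm_num [Finset.Icc_self, Finset.sum_range_succ]
    | succ N ih =>
      rw [show N+1+2 = (N+2)+1 from rfl, Finset.sum_Icc_succ_top (by omega), ih,
        Finset.sum_range_succ (fun j => (1:ℝ)/(j+1)) (N+2)]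
      push_cast
      ring
  rw [show n+1+1 = n+2 from rfl, hIcc n, Finset.sum_range_succ]
  have hfne : ((n.factorial : ℝ)) ≠ 0 := Nat.cast_ne_zero.2 n.factorial_ne_zero
  have h1 : ((n:ℝ)+1) ≠ 0 := by positivity
  have h2 : ((n:ℝ)+2) ≠ 0 := by positivity
  rw [Nat.factorial_succ]
  push_cast
  field_simp
  ring
end

section
/- For r ≥ 1 and the continuous function E_r(x) = 2(∑_{i=1}^m x_i)·log r − [∑_{i=1}^m x_i·log x_i + (1 − ∑_{i=1}^m x_i)·log(1 − ∑_{i=1}^m x_i)] on the standard simplex Σ_m (with the convention 0·log 0 = 0), one has ∫_{Σ_m} E_r(x) dx = 2m·log r/(m+1)! + (1/m!)·∑_{k=2}^{m+1} 1/k. -/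
/-!
Slicing the simplex `{x ≥ 0, ∑ xᵢ ≤ c}` along a coordinate `xᵢ` (Fubini) leaves segments `[0, a]`
on which `xᵢ = t` and the slack `x₀ = c - ∑ xᵢ` equals `a - t`; the reflection `t ↦ a - t` gives
`∫ φ (xᵢ) = ∫ φ (x₀)`. Hence the integral equals `2 m log r ∫ x₀ - (m + 1) ∫ x₀ log x₀`.
Slicing also turns `∫ g (x₀)` over the `(m + 1)`-simplex into `∫ G (x₀)` over the `m`-simplex,
where `G` is the antiderivative of `g` vanishing at `0`. Induction on `m` then evaluates
`∫ x₀ ^ j` and `∫ x₀ ^ (j + 1) log x₀`; the harmonic numbers come from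
`∫₀ᵃ t ^ n log t = a ^ (n + 1) log a / (n + 1) - a ^ (n + 1) / (n + 1) ^ 2`.
-/

open MeasureTheory Set Real

def solidSimplex (m : ℕ) (c : ℝ) : Set (Fin m → ℝ) := {x | (∀ i, 0 ≤ x i) ∧ ∑ i, x i ≤ c}

theorem continuous_pow_succ_mul_log (n : ℕ) : Continuous fun t : ℝ => t ^ (n + 1) * log t := by
  simpa only [pow_succ, mul_assoc] using (continuous_pow n).fun_mul continuous_mul_log

theorem integral_pow_succ_mul_log {a : ℝ} (ha : 0 ≤ a) (n : ℕ) :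
    ∫ t in 0..a, t ^ (n + 1) * log t = a ^ (n + 2) * log a / (n + 2) - a ^ (n + 2) / (n + 2) ^ 2 := by
  have hderiv : ∀ t ∈ Ioo 0 a, HasDerivAt
      (fun t => t ^ (n + 2) * log t / (n + 2) - t ^ (n + 2) / (n + 2) ^ 2) (t ^ (n + 1) * log t) t := by
    intro t ht
    have ht0 : t ≠ 0 := ht.1.ne'
    refine ((((hasDerivAt_pow (n + 2) t).mul (hasDerivAt_log ht0)).div_const _).sub
      ((hasDerivAt_pow (n + 2) t).div_const _)).congr_deriv ?_
    push_cast
    field_simp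
    ring
  have hcont : ContinuousOn
      (fun t => t ^ (n + 2) * log t / (n + 2) - t ^ (n + 2) / (n + 2) ^ 2) (Icc 0 a) :=
    (((continuous_pow_succ_mul_log (n + 1)).div_const _).sub
      ((continuous_pow _).div_const _)).continuousOn
  rw [intervalIntegral.integral_eq_sub_of_hasDerivAt_of_le ha hcont hderiv
    ((continuous_pow_succ_mul_log n).intervalIntegrable 0 a)]
  simp

namespace solidSimplex

variable {m : ℕ} {c : ℝ}

theorem isCompact : IsCompact (solidSimplex m c) := by
  have hclosed : IsClosed (solidSimplex m c) := by
    simp only [solidSimplex, ofPred_and, ofPred_forall]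
    exact (isClosed_iInter fun i => isClosed_le continuous_const (continuous_apply i)).inter
      (isClosed_le (by fun_prop) continuous_const)
  refine (isCompact_univ_pi fun _ => isCompact_Icc (a := 0) (b := c)).of_isClosed_subset
    hclosed fun x hx i _ => ⟨hx.1 i, ?_⟩
  exact (Finset.single_le_sum (fun k _ => hx.1 k) (Finset.mem_univ i)).trans hx.2

theorem measurableSet : MeasurableSet (solidSimplex m c) :=
  isCompact.isClosed.measurableSet

theorem integrableOn_of_continuous {f : (Fin m → ℝ) → ℝ} (hf : Continuous f) :
    IntegrableOn f (solidSimplex m c) :=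
  hf.continuousOn.integrableOn_compact isCompact

theorem setIntegral_zero (hc : 0 ≤ c) (f : (Fin 0 → ℝ) → ℝ) :
    ∫ x in solidSimplex 0 c, f x = f 0 := by
  have huniv : solidSimplex 0 c = univ := by ext x; simp [solidSimplex, hc]
  rw [huniv, Measure.restrict_univ, integral_unique]
  simp [Measure.real, volume_pi]
  rfl

theorem insertNth_mem_iff (i : Fin (m + 1)) (t : ℝ) (y : Fin m → ℝ) :
    i.insertNth t y ∈ solidSimplex (m + 1) c ↔ y ∈ solidSimplex m c ∧ t ∈ Icc 0 (c - ∑ k, y k) := by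
  simp only [solidSimplex, mem_ofPred_eq, Fin.forall_iff_succAbove i, Fin.sum_univ_succAbove _ i,
    Fin.insertNth_apply_same, Fin.insertNth_apply_succAbove, mem_Icc]
  constructor
  · rintro ⟨⟨ht, hy⟩, hsum⟩
    exact ⟨⟨hy, by linarith⟩, ht, by linarith⟩
  · rintro ⟨⟨hy, -⟩, ht, hsum⟩
    exact ⟨⟨ht, hy⟩, by linarith⟩

theorem setIntegral_succ (i : Fin (m + 1)) {f : (Fin (m + 1) → ℝ) → ℝ}
    (hf : IntegrableOn f (solidSimplex (m + 1) c)) :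
    ∫ x in solidSimplex (m + 1) c, f x =
      ∫ y in solidSimplex m c, ∫ t in 0..c - ∑ k, y k, f (i.insertNth t y) := by
  have hmp := (volume_preserving_piFinSuccAbove (fun _ : Fin (m + 1) => ℝ) i).symm
  have hfiber (y : Fin m → ℝ) :
      ∫ t, (solidSimplex (m + 1) c).indicator f (i.insertNth t y) =
        (solidSimplex m c).indicator (fun y => ∫ t in 0..c - ∑ k, y k, f (i.insertNth t y)) y := by
    by_cases hy : y ∈ solidSimplex m c
    · have hfib : ∀ t, (solidSimplex (m + 1) c).indicator f (i.insertNth t y) =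
          (Icc 0 (c - ∑ k, y k)).indicator (fun t => f (i.insertNth t y)) t := by
        intro t
        simp only [indicator, insertNth_mem_iff, hy, true_and]
      rw [integral_congr_ae (.of_forall hfib), integral_indicator measurableSet_Icc,
        integral_Icc_eq_integral_Ioc, indicator_of_mem hy,
        intervalIntegral.integral_of_le (sub_nonneg.2 hy.2)]
    · simp [indicator, insertNth_mem_iff, hy]
  have hint : Integrable (fun z => (solidSimplex (m + 1) c).indicator f
      ((MeasurableEquiv.piFinSuccAbove (fun _ => ℝ) i).symm z)) (volume.prod volume) :=
    (hmp.integrable_comp_emb (MeasurableEquiv.measurableEmbedding _)).2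
      ((integrable_indicator_iff measurableSet).2 hf)
  rw [← integral_indicator measurableSet, ← hmp.integral_comp', ← integral_indicator measurableSet,
    Measure.volume_eq_prod, integral_prod_symm _ hint]
  simp_rw [MeasurableEquiv.piFinSuccAbove_symm_apply, Fin.insertNthEquiv, Equiv.coe_fn_mk, hfiber]

theorem setIntegral_succ_comp_sub_sum {g : ℝ → ℝ} (hg : Continuous g) :
    ∫ x in solidSimplex (m + 1) c, g (c - ∑ k, x k) =
      ∫ y in solidSimplex m c, ∫ u in 0..c - ∑ k, y k, g u := by
  rw [setIntegral_succ 0 (integrableOn_of_continuous (by fun_prop))]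
  congr 1 with y
  simp_rw [Fin.insertNth_zero', Fin.sum_cons, sub_add_eq_sub_sub_swap]
  rw [intervalIntegral.integral_comp_sub_left g, sub_self, sub_zero]

theorem setIntegral_comp_apply_eq_comp_sub_sum {φ : ℝ → ℝ} (hφ : Continuous φ) (i : Fin m) :
    ∫ x in solidSimplex m c, φ (x i) = ∫ x in solidSimplex m c, φ (c - ∑ k, x k) := by
  cases m with
  | zero => exact i.elim0
  | succ m =>
    rw [setIntegral_succ i (integrableOn_of_continuous (by fun_prop)),
      setIntegral_succ_comp_sub_sum hφ]
    simp only [Fin.insertNth_apply_same]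

theorem setIntegral_sum_comp_apply {φ : ℝ → ℝ} (hφ : Continuous φ) :
    ∫ x in solidSimplex m c, ∑ i, φ (x i) = m * ∫ x in solidSimplex m c, φ (c - ∑ k, x k) := by
  rw [integral_finsetSum _ fun i _ => integrableOn_of_continuous (by fun_prop)]
  simp [setIntegral_comp_apply_eq_comp_sub_sum hφ]

theorem setIntegral_pow_sub_sum (hc : 0 ≤ c) (j : ℕ) :
    ∫ x in solidSimplex m c, (c - ∑ k, x k) ^ j =
      c ^ (m + j) * j.factorial / (m + j).factorial := by
  induction m generalizing j with
  | zero => simp [setIntegral_zero hc, Nat.factorial_ne_zero]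
  | succ m ih =>
    rw [setIntegral_succ_comp_sub_sum (continuous_pow j)]
    simp only [integral_pow, zero_pow j.succ_ne_zero, sub_zero]
    rw [integral_div, ih, Nat.factorial_succ, show m + (j + 1) = m + 1 + j by omega]
    push_cast
    field_simp

theorem setIntegral_pow_succ_mul_log_sub_sum (hc : 0 ≤ c) (j : ℕ) :
    ∫ x in solidSimplex m c, (c - ∑ k, x k) ^ (j + 1) * log (c - ∑ k, x k) =
      c ^ (m + j + 1) * (j + 1).factorial / (m + j + 1).factorial *
        (log c - (harmonic (m + j + 1) - harmonic (j + 1))) := by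
  induction m generalizing j with
  | zero => simp [setIntegral_zero hc, Nat.factorial_ne_zero]
  | succ m ih =>
    have hinner : EqOn (fun y : Fin m → ℝ => ∫ u in 0..c - ∑ k, y k, u ^ (j + 1) * log u)
        (fun y => (c - ∑ k, y k) ^ (j + 2) * log (c - ∑ k, y k) / (j + 2) -
          (c - ∑ k, y k) ^ (j + 2) / (j + 2) ^ 2) (solidSimplex m c) :=
      fun y hy => integral_pow_succ_mul_log (sub_nonneg.2 hy.2) j
    have hlog : IntegrableOn (fun x : Fin m → ℝ =>
        (c - ∑ k, x k) ^ (j + 2) * log (c - ∑ k, x k) / (j + 2)) (solidSimplex m c) :=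
      integrableOn_of_continuous (((continuous_pow_succ_mul_log (j + 1)).comp
        (by fun_prop : Continuous fun x : Fin m → ℝ => c - ∑ k, x k)).div_const _)
    rw [setIntegral_succ_comp_sub_sum (continuous_pow_succ_mul_log j),
      setIntegral_congr_fun measurableSet hinner,
      integral_sub hlog (integrableOn_of_continuous (by fun_prop)),
      integral_div, integral_div, ih, setIntegral_pow_sub_sum hc,
      harmonic_succ (j + 1), show m + (j + 1) + 1 = m + 1 + j + 1 by omega,
      show m + (j + 2) = m + 1 + j + 1 by omega, Nat.factorial_succ (j + 1)]
    push_cast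
    field_simp
    ring

end solidSimplex

theorem sum_Icc_two_one_div_eq_harmonic_sub_one (n : ℕ) :
    ∑ k ∈ Finset.Icc 2 (n + 1), (1 : ℝ) / k = harmonic (n + 1) - 1 := by
  rw [harmonic_eq_sum_Icc, ← Finset.insert_Icc_add_one_left_eq_Icc (by omega : 1 ≤ n + 1),
    Finset.sum_insert (by simp)]
  push_cast
  simp

theorem stmt_9_general (m : ℕ) (r : ℝ) :
    ∫ x in {x : Fin m → ℝ | (∀ i, 0 ≤ x i) ∧ ∑ i, x i ≤ 1},
        (2 * (∑ i, x i) * Real.log r -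
          ((∑ i, x i * Real.log (x i)) + (1 - ∑ i, x i) * Real.log (1 - ∑ i, x i))) =
      2 * m * Real.log r / (Nat.factorial (m + 1) : ℝ) +
        (1 / (Nat.factorial m : ℝ)) * ∑ k ∈ Finset.Icc 2 (m + 1), (1 : ℝ) / k := by
  change ∫ x in solidSimplex m 1, _ = _
  have hsplit (x : Fin m → ℝ) :
      2 * (∑ i, x i) * log r - ((∑ i, x i * log (x i)) + (1 - ∑ i, x i) * log (1 - ∑ i, x i)) =
        ∑ i, (2 * log r * x i - x i * log (x i)) - (1 - ∑ i, x i) * log (1 - ∑ i, x i) := by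
    rw [Finset.sum_sub_distrib, ← Finset.mul_sum]
    ring
  have hpow := solidSimplex.setIntegral_pow_sub_sum (m := m) zero_le_one 1
  have hlog := solidSimplex.setIntegral_pow_succ_mul_log_sub_sum (m := m) zero_le_one 0
  have hharmonic_one : harmonic 1 = 1 := by simp [harmonic]
  simp only [pow_one, one_pow, log_one, zero_add, add_zero, Nat.factorial_one, Nat.cast_one,
    hharmonic_one] at hpow hlog
  simp_rw [hsplit]
  rw [integral_sub (solidSimplex.integrableOn_of_continuous (by fun_prop))
      (solidSimplex.integrableOn_of_continuous (by fun_prop)),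
    solidSimplex.setIntegral_sum_comp_apply (φ := fun t => 2 * log r * t - t * log t)
      (by fun_prop),
    integral_sub (solidSimplex.integrableOn_of_continuous (by fun_prop))
      (solidSimplex.integrableOn_of_continuous (by fun_prop)),
    integral_const_mul, hpow, hlog, sum_Icc_two_one_div_eq_harmonic_sub_one, Nat.factorial_succ]
  push_cast
  field_simp
  ring

theorem stmt_9 (m : ℕ) (hm : 0 < m) (r : ℝ) (hr : 1 ≤ r) :
    ∫ x in {x : Fin m → ℝ | (∀ i, 0 ≤ x i) ∧ ∑ i, x i ≤ 1},
        (2 * (∑ i, x i) * Real.log r -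
          ((∑ i, x i * Real.log (x i)) + (1 - ∑ i, x i) * Real.log (1 - ∑ i, x i))) =
      2 * m * Real.log r / (Nat.factorial (m + 1) : ℝ) +
        (1 / (Nat.factorial m : ℝ)) * ∑ k ∈ Finset.Icc 2 (m + 1), (1 : ℝ) / k :=
  stmt_9_general m r
end

section
/- For a ≥ 0 and N ≥ 1, the volume of the set F = {x ∈ [0,R]^n : ∏_{i=1}^n x_i ≤ e^a} satisfies vol(F) ≤ (e^a/(n−1)!)·(n·log R − a)^n whenever n·log R − a > n ≥ 1. (Lemma 4.6 of Nishry, used in the proof.) -/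
/-!
Slicing off the first coordinate, the volume of `{x ∈ [0,R]^(n+1) : ∏ xᵢ ≤ T}` is
`∫₀^R vol{y ∈ [0,R]^n : ∏ yᵢ ≤ T/t} dt`. Bounding the slices with `t ≤ x₀ = T/R^n` by `R^n` and
the others inductively, `∫ log(t/x₀)^k / t dt = log(R/x₀)^(k+1)/(k+1)` gives
`vol ≤ T ∑_{k<n} L^k/k!` with `L = log(R^n/T)`. For `T = e^a` we have `L = n log R - a ≥ n`,
so the terms `L^k/k!` increase for `k < n` and the sum is at most `n L^(n-1)/(n-1)! ≤ L^n/(n-1)!`.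
-/

open MeasureTheory Set Real Finset

lemma hasDerivAt_log_div_pow_succ {a t : ℝ} (ha : 0 < a) (ht : 0 < t) (k : ℕ) :
    HasDerivAt (fun t => log (t / a) ^ (k + 1) / (k + 1)) (log (t / a) ^ k / t) t := by
  have hlog : HasDerivAt (fun t => log (t / a)) t⁻¹ t :=
    (((hasDerivAt_id t).div_const a).log (by positivity)).congr_deriv
      (by simp only [id_eq]; field_simp)
  refine ((hlog.pow (k + 1)).div_const ((k : ℝ) + 1)).congr_deriv ?_
  rw [Nat.add_sub_cancel]
  push_cast
  field_simp

lemma continuousOn_log_div_pow_div {a : ℝ} {s : Set ℝ} (ha : a ≠ 0)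
    (hs : ∀ t ∈ s, t ≠ 0) (k : ℕ) : ContinuousOn (fun t => log (t / a) ^ k / t) s := by
  have : ∀ t ∈ s, t ≠ 0 ∧ t / a ≠ 0 := fun t ht => ⟨hs t ht, div_ne_zero (hs t ht) ha⟩
  fun_prop (disch := simp_all)

lemma integral_log_div_pow_div {a b : ℝ} (ha : 0 < a) (hab : a ≤ b) (k : ℕ) :
    ∫ t in a..b, log (t / a) ^ k / t = log (b / a) ^ (k + 1) / (k + 1) := by
  have hpos : ∀ t ∈ uIcc a b, 0 < t := fun t ht => ha.trans_le (uIcc_of_le hab ▸ ht).1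
  rw [intervalIntegral.integral_eq_sub_of_hasDerivAt
    (fun t ht => hasDerivAt_log_div_pow_succ ha (hpos t ht) k)
    (continuousOn_log_div_pow_div ha.ne' (fun t ht => (hpos t ht).ne') k).intervalIntegrable]
  simp [div_self ha.ne']

def boxProdSublevel (n : ℕ) (R T : ℝ) : Set (Fin n → ℝ) :=
  {x | (∀ i, x i ∈ Icc 0 R) ∧ ∏ i, x i ≤ T}

/-- The slice `t = 0` is the whole box rather than the junk sublevel set at `T / 0 = 0`,
hence the integral over `Ioc`. -/
lemma volume_boxProdSublevel_succ (n : ℕ) (R T : ℝ) :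
    volume (boxProdSublevel (n + 1) R T) =
      ∫⁻ t in Ioc 0 R, volume (boxProdSublevel n R (T / t)) := by
  set E : Set (ℝ × (Fin n → ℝ)) :=
    {p | (p.1 ∈ Icc 0 R ∧ p.2 ∈ univ.pi fun _ => Icc 0 R) ∧ p.1 * ∏ i, p.2 i ≤ T}
  have hE : MeasurableSet E := by
    refine ((measurable_fst measurableSet_Icc).inter ?_).inter <|
      measurableSet_le (measurable_fst.mul <| Finset.measurable_prod _ fun i _ =>
        (measurable_pi_apply i).comp measurable_snd) measurable_const
    exact measurable_snd (.univ_pi fun _ => measurableSet_Icc)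
  have hpre :
      MeasurableEquiv.piFinSuccAbove (fun _ => ℝ) 0 ⁻¹' E = boxProdSublevel (n + 1) R T := by
    ext x
    simp [E, boxProdSublevel, Fin.prod_univ_succ, Fin.forall_fin_succ, Fin.tail_def, Pi.le_def,
      forall_and]
    tauto
  have hsupp : (fun t => volume (Prod.mk t ⁻¹' E)).support ⊆ Icc 0 R := fun t ht =>
    by_contra fun hout => ht (measure_eq_zero_iff_ae_notMem.2 (ae_of_all _ fun _ hy => hout hy.1.1))
  rw [← hpre, (volume_preserving_piFinSuccAbove (fun _ => ℝ) 0).measure_preimage_equiv,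
    Measure.volume_eq_prod, Measure.prod_apply hE, ← setLIntegral_eq_of_support_subset hsupp,
    ← setLIntegral_congr Ioc_ae_eq_Icc]
  refine setLIntegral_congr_fun measurableSet_Ioc fun t ht => congrArg volume ?_
  ext y
  simp [E, boxProdSublevel, ht.1.le, ht.2, le_div_iff₀ ht.1, mul_comm t, Pi.le_def, forall_and]

lemma volume_boxProdSublevel_le_pow {n : ℕ} {R : ℝ} (hR : 0 ≤ R) (T : ℝ) :
    volume (boxProdSublevel n R T) ≤ ENNReal.ofReal (R ^ n) := by
  calc volume (boxProdSublevel n R T) ≤ volume (univ.pi fun _ : Fin n => Icc 0 R) :=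
        measure_mono fun x hx i _ => hx.1 i
    _ = ENNReal.ofReal (R ^ n) := by rw [volume_pi_pi]; simp [ENNReal.ofReal_pow hR]

lemma volume_boxProdSublevel_one_le (R T : ℝ) :
    volume (boxProdSublevel 1 R T) ≤ ENNReal.ofReal T := by
  calc volume (boxProdSublevel 1 R T) ≤ volume (univ.pi fun _ : Fin 1 => Icc 0 T) :=
        measure_mono fun x hx i _ => ⟨(hx.1 i).1, by simpa [Subsingleton.elim i 0] using hx.2⟩
    _ = ENNReal.ofReal T := by rw [volume_pi_pi]; simp

lemma lintegral_Ioc_ofReal_eq_integral {f : ℝ → ℝ} {a b : ℝ} (hab : a ≤ b)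
    (hf : ContinuousOn f (Icc a b)) (hf0 : ∀ t ∈ Ioc a b, 0 ≤ f t) :
    ∫⁻ t in Ioc a b, ENNReal.ofReal (f t) = ENNReal.ofReal (∫ t in a..b, f t) := by
  rw [intervalIntegral.integral_of_le hab, ofReal_integral_eq_lintegral_ofReal
    (hf.integrableOn_Icc.mono_set Ioc_subset_Icc_self) ((ae_restrict_iff' measurableSet_Ioc).2
      (ae_of_all _ hf0))]

lemma integral_mul_sum_log_div_pow {a b : ℝ} (ha : 0 < a) (hab : a ≤ b) (T : ℝ) (n : ℕ) :
    ∫ t in a..b, T / t * ∑ k ∈ range n, log (t / a) ^ k / k.factorial =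
      T * ∑ k ∈ range n, log (b / a) ^ (k + 1) / (k + 1).factorial := by
  have hcont (k : ℕ) : ContinuousOn (fun t => log (t / a) ^ k / t) (uIcc a b) :=
    continuousOn_log_div_pow_div ha.ne' (fun t ht => (ha.trans_le (uIcc_of_le hab ▸ ht).1).ne') k
  have hsplit : (fun t => T / t * ∑ k ∈ range n, log (t / a) ^ k / k.factorial) =
      fun t => ∑ k ∈ range n, T / k.factorial * (log (t / a) ^ k / t) := by
    ext t; rw [mul_sum]; exact sum_congr rfl fun k _ => by ring
  rw [hsplit, mul_sum,
    intervalIntegral.integral_finsetSum fun k _ => (hcont k).intervalIntegrable.const_mul _]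
  refine sum_congr rfl fun k _ => ?_
  rw [intervalIntegral.integral_const_mul, integral_log_div_pow_div ha hab, Nat.factorial_succ]
  push_cast
  field_simp

lemma volume_boxProdSublevel_succ_le {n : ℕ} {R : ℝ} (hR : 0 < R)
    (ih : ∀ T, 0 < T → T ≤ R ^ n → volume (boxProdSublevel n R T) ≤
      ENNReal.ofReal (T * ∑ k ∈ range n, log (R ^ n / T) ^ k / k.factorial))
    {T : ℝ} (hT : 0 < T) (hTR : T ≤ R ^ (n + 1)) :
    volume (boxProdSublevel (n + 1) R T) ≤
      ENNReal.ofReal (T * ∑ k ∈ range (n + 1), log (R ^ (n + 1) / T) ^ k / k.factorial) := by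
  set x₀ := T / R ^ n
  have hx₀ : 0 < x₀ := by positivity
  have hRx₀ : R ^ n * x₀ = T := mul_div_cancel₀ _ (pow_pos hR n).ne'
  have hx₀R : x₀ ≤ R := by rw [div_le_iff₀ (by positivity)]; simpa [pow_succ'] using hTR
  set f : ℝ → ℝ := fun t => T / t * ∑ k ∈ range n, log (t / x₀) ^ k / k.factorial
  have hsection (t : ℝ) (ht : t ∈ Ioc x₀ R) :
      volume (boxProdSublevel n R (T / t)) ≤ ENNReal.ofReal (f t) := by
    have ht₀ : 0 < t := hx₀.trans ht.1
    have hlog : R ^ n / (T / t) = t / x₀ := by rw [← hRx₀]; field_simp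
    simpa only [hlog] using ih (T / t) (by positivity)
      (by rw [div_le_iff₀ ht₀, ← hRx₀]; exact mul_le_mul_of_nonneg_left ht.1.le (by positivity))
  have hf_cont : ContinuousOn f (Icc x₀ R) := by
    have : ∀ t ∈ Icc x₀ R, t ≠ 0 ∧ t / x₀ ≠ 0 := fun t ht => by
      have := hx₀.trans_le ht.1; constructor <;> positivity
    fun_prop (disch := simp_all)
  have hf_nonneg (t : ℝ) (ht : t ∈ Ioc x₀ R) : 0 ≤ f t := by
    have ht₀ : 0 < t := hx₀.trans ht.1
    have hlog : 0 ≤ log (t / x₀) := log_nonneg ((one_le_div hx₀).2 ht.1.le)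
    positivity
  calc volume (boxProdSublevel (n + 1) R T)
      = (∫⁻ t in Ioc 0 x₀, volume (boxProdSublevel n R (T / t))) +
          ∫⁻ t in Ioc x₀ R, volume (boxProdSublevel n R (T / t)) := by
        rw [volume_boxProdSublevel_succ, ← Ioc_union_Ioc_eq_Ioc hx₀.le hx₀R,
          lintegral_union measurableSet_Ioc (Ioc_disjoint_Ioc_of_le le_rfl)]
    _ ≤ (∫⁻ _ in Ioc 0 x₀, ENNReal.ofReal (R ^ n)) +
          ∫⁻ t in Ioc x₀ R, ENNReal.ofReal (f t) :=
        add_le_add (setLIntegral_mono' measurableSet_Ioc fun t _ =>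
          volume_boxProdSublevel_le_pow hR.le _) (setLIntegral_mono' measurableSet_Ioc hsection)
    _ = ENNReal.ofReal T + ENNReal.ofReal (∫ t in x₀..R, f t) := by
        rw [setLIntegral_const, Real.volume_Ioc, ← ENNReal.ofReal_mul (by positivity),
          lintegral_Ioc_ofReal_eq_integral hx₀R hf_cont hf_nonneg, sub_zero, hRx₀]
    _ = ENNReal.ofReal (T * ∑ k ∈ range (n + 1), log (R ^ (n + 1) / T) ^ k / k.factorial) := by
        have hlog : 0 ≤ log (R / x₀) := log_nonneg ((one_le_div hx₀).2 hx₀R)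
        rw [integral_mul_sum_log_div_pow hx₀ hx₀R, ← ENNReal.ofReal_add hT.le (by positivity),
          sum_range_succ', show R / x₀ = R ^ (n + 1) / T by rw [← hRx₀]; field_simp; ring]
        simp only [pow_zero, Nat.factorial_zero, Nat.cast_one, div_one]
        congr 1
        ring

theorem volume_boxProdSublevel_le {n : ℕ} (hn : 1 ≤ n) {R : ℝ} (hR : 0 < R) {T : ℝ}
    (hT : 0 < T) (hTR : T ≤ R ^ n) :
    volume (boxProdSublevel n R T) ≤
      ENNReal.ofReal (T * ∑ k ∈ range n, log (R ^ n / T) ^ k / k.factorial) := by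
  induction n, hn using Nat.le_induction generalizing T with
  | base => simpa using volume_boxProdSublevel_one_le R T
  | succ n _ ih => exact volume_boxProdSublevel_succ_le hR (fun T hT hTR => ih hT hTR) hT hTR

lemma pow_div_factorial_le_pow_div_factorial {b : ℝ} {k m : ℕ} (hkm : k ≤ m)
    (hmb : (m : ℝ) ≤ b) :
    b ^ k / k.factorial ≤ b ^ m / m.factorial := by
  induction m, hkm using Nat.le_induction with
  | base => rfl
  | succ m _ ih =>
    have hm1 : (m : ℝ) + 1 ≤ b := by exact_mod_cast hmb
    have hb : 0 ≤ b := by linarith [m.cast_nonneg (α := ℝ)]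
    calc b ^ k / k.factorial ≤ b ^ m / m.factorial := ih (by linarith)
      _ ≤ b ^ m / m.factorial * (b / (m + 1)) :=
        le_mul_of_one_le_right (by positivity) ((one_le_div (by positivity)).2 hm1)
      _ = b ^ (m + 1) / (m + 1).factorial := by
        rw [Nat.factorial_succ]; push_cast; field_simp; ring

lemma sum_range_pow_div_factorial_le {n : ℕ} {b : ℝ} (hn : 1 ≤ n) (hnb : (n : ℝ) ≤ b) :
    ∑ k ∈ range n, b ^ k / k.factorial ≤ b ^ n / (n - 1).factorial := by
  obtain ⟨m, rfl⟩ := Nat.exists_eq_add_of_le' hn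
  have hmb : (m : ℝ) ≤ b := by push_cast at hnb; linarith
  have hb : 0 ≤ b := by linarith [m.cast_nonneg (α := ℝ)]
  calc ∑ k ∈ range (m + 1), b ^ k / k.factorial
      ≤ ∑ _k ∈ range (m + 1), b ^ m / m.factorial :=
        sum_le_sum fun k hk => pow_div_factorial_le_pow_div_factorial
          (Nat.lt_succ_iff.1 (mem_range.1 hk)) hmb
    _ = (m + 1 : ℕ) * (b ^ m / m.factorial) := by simp
    _ ≤ b * (b ^ m / m.factorial) :=
        mul_le_mul_of_nonneg_right hnb (by positivity)
    _ = b ^ (m + 1) / (m + 1 - 1).factorial := by simp [pow_succ]; ring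

theorem stmt_12_general (n : ℕ) (hn : 1 ≤ n) (R a : ℝ) (hR : 1 < R)
    (h : (n : ℝ) * Real.log R - a > n) :
    (volume {x : Fin n → ℝ | (∀ i, x i ∈ Set.Icc (0 : ℝ) R) ∧ ∏ i, x i ≤ Real.exp a}).toReal ≤
      Real.exp a / (Nat.factorial (n - 1) : ℝ) * ((n : ℝ) * Real.log R - a) ^ n := by
  have hR₀ : 0 < R := one_pos.trans hR
  have hlog : log (R ^ n / exp a) = n * log R - a := by
    rw [log_div (by positivity) (exp_ne_zero a), log_pow, log_exp]
  have hexp : exp a ≤ R ^ n := by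
    rw [← exp_log (pow_pos hR₀ n), exp_le_exp, log_pow]
    linarith [(Nat.one_le_cast (α := ℝ)).2 hn]
  have hvol := volume_boxProdSublevel_le hn hR₀ (exp_pos a) hexp
  rw [hlog] at hvol
  have hb : 0 < (n : ℝ) * log R - a := by linarith [n.cast_nonneg (α := ℝ)]
  refine ENNReal.toReal_le_of_le_ofReal (by positivity) (hvol.trans (ENNReal.ofReal_le_ofReal ?_))
  rw [div_mul_eq_mul_div, mul_div_assoc]
  exact mul_le_mul_of_nonneg_left (sum_range_pow_div_factorial_le hn h.le) (exp_pos a).le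

theorem stmt_12 (n : ℕ) (hn : 1 ≤ n) (R a : ℝ) (hR : 1 < R) (ha : 0 ≤ a)
    (h : (n : ℝ) * Real.log R - a > n) :
    (volume {x : Fin n → ℝ | (∀ i, x i ∈ Set.Icc (0 : ℝ) R) ∧ ∏ i, x i ≤ Real.exp a}).toReal ≤
      Real.exp a / (Nat.factorial (n - 1) : ℝ) * ((n : ℝ) * Real.log R - a) ^ n :=
  stmt_12_general n hn R a hR h
end
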